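/- Let Γ(τ) be a holomorphic function on a domain in the upper half-plane and define Ω := Γ' − (1/2)Γ². Suppose x(τ) is holomorphic with ẋ ≠ 0, Γ = ẍ/ẋ (so that ∇x := ẋ satisfies ∇²x = ẍ − Γẋ = 0), and suppose x satisfies [x,τ] = Q(x) for a function Q, i.e. Ω = Q(x)·ẋ². Then, with ∇Ω := Ω̇ − 2ΓΩ and ∇²Ω := (d/dτ − 3Γ)(d/dτ − 2Γ)Ω, one has the identities (∇Ω)²/Ω³ = Q'(x)²/Q(x)³ and ∇²Ω/Ω² = Q''(x)/Q(x)², wherever Ω and Q(x) are nonzero. -/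

import Mathlib

/-- The meromorphic derivative [x,τ] = x⃛/ẋ³ − (3/2)ẍ²/ẋ⁴. -/
noncomputable def merD (x : ℂ → ℂ) (τ : ℂ) : ℂ :=
  iteratedDeriv 3 x τ / (deriv x τ) ^ 3
    - (3 / 2) * (iteratedDeriv 2 x τ) ^ 2 / (deriv x τ) ^ 4

/-!
For the connection `Γ = ẍ/ẋ` the function `ẋ` is flat, `∇ẋ = ẍ - Γẋ = 0`, so the covariant
derivative of a weight-`n` object `g(x) ẋⁿ` only sees the chain rule: `∇(g(x) ẋⁿ) = g'(x) ẋⁿ⁺¹`.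
Applied twice to `Ω = Q(x) ẋ²` this gives `∇Ω = Q'(x) ẋ³` and `∇²Ω = Q''(x) ẋ⁴`, and the powers
of `ẋ` cancel in `(∇Ω)²/Ω³` and `∇²Ω/Ω²`.
-/

open Filter Topology

section CovariantDerivative

variable {𝕜 : Type*} [NontriviallyNormedField 𝕜]

noncomputable def covDeriv (k : ℕ) (Γ f : 𝕜 → 𝕜) : 𝕜 → 𝕜 :=
  fun t => deriv f t - k * Γ t * f t

theorem hasDerivAt_comp_mul_deriv_pow {x g Γ : 𝕜 → 𝕜} {σ : 𝕜} (n : ℕ)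
    (hg : DifferentiableAt 𝕜 g (x σ)) (hx : DifferentiableAt 𝕜 x σ)
    (hx' : DifferentiableAt 𝕜 (deriv x) σ) (hΓ : deriv (deriv x) σ = Γ σ * deriv x σ) :
    HasDerivAt (fun t => g (x t) * deriv x t ^ n)
      (deriv g (x σ) * deriv x σ ^ (n + 1) + n * Γ σ * (g (x σ) * deriv x σ ^ n)) σ := by
  have hgx : HasDerivAt (fun t => g (x t)) (deriv g (x σ) * deriv x σ) σ :=
    hg.hasDerivAt.comp σ hx.hasDerivAt
  refine (hgx.mul (hx'.hasDerivAt.fun_pow n)).congr_deriv ?_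
  rcases n with _ | n
  · simp
  · rw [hΓ, Nat.add_sub_cancel]
    push_cast
    ring

theorem covDeriv_eq_of_eventuallyEq_comp_mul_deriv_pow {x f g Γ : 𝕜 → 𝕜} {σ : 𝕜} {n : ℕ}
    (hf : f =ᶠ[𝓝 σ] fun t => g (x t) * deriv x t ^ n)
    (hg : DifferentiableAt 𝕜 g (x σ)) (hx : DifferentiableAt 𝕜 x σ)
    (hx' : DifferentiableAt 𝕜 (deriv x) σ) (hΓ : deriv (deriv x) σ = Γ σ * deriv x σ) :
    covDeriv n Γ f σ = deriv g (x σ) * deriv x σ ^ (n + 1) := by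
  rw [covDeriv, hf.deriv_eq, (hasDerivAt_comp_mul_deriv_pow n hg hx hx' hΓ).deriv, hf.eq_of_nhds]
  ring

end CovariantDerivative

theorem connection_scalar_identities (U : Set ℂ) (hU : IsOpen U)
    (x Γ Ω Q : ℂ → ℂ)
    (hx : ∀ τ ∈ U, AnalyticAt ℂ x τ)
    (hQa : ∀ τ ∈ U, AnalyticAt ℂ Q (x τ))
    (hx' : ∀ τ ∈ U, deriv x τ ≠ 0)
    (hΓ : ∀ τ ∈ U, Γ τ = deriv (deriv x) τ / deriv x τ)
    (hΩ : ∀ τ ∈ U, Ω τ = Q (x τ) * (deriv x τ) ^ 2) :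
    ∀ τ ∈ U, Ω τ ≠ 0 → Q (x τ) ≠ 0 →
      ((deriv Ω τ - 2 * Γ τ * Ω τ) ^ 2 / (Ω τ) ^ 3
          = (deriv Q (x τ)) ^ 2 / (Q (x τ)) ^ 3
        ∧ (deriv (fun t => deriv Ω t - 2 * Γ t * Ω t) τ
              - 3 * Γ τ * (deriv Ω τ - 2 * Γ τ * Ω τ)) / (Ω τ) ^ 2
          = deriv (deriv Q) (x τ) / (Q (x τ)) ^ 2) := by
  intro τ hτ _ hQ0
  have hflat : ∀ σ ∈ U, deriv (deriv x) σ = Γ σ * deriv x σ := fun σ hσ => by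
    rw [hΓ σ hσ, div_mul_cancel₀ _ (hx' σ hσ)]
  have hΩ' : ∀ σ ∈ U, covDeriv 2 Γ Ω σ = deriv Q (x σ) * deriv x σ ^ 3 := fun σ hσ =>
    covDeriv_eq_of_eventuallyEq_comp_mul_deriv_pow (eventuallyEq_of_mem (hU.mem_nhds hσ) hΩ)
      (hQa σ hσ).differentiableAt (hx σ hσ).differentiableAt
      (hx σ hσ).deriv.differentiableAt (hflat σ hσ)
  have hΩ'' : covDeriv 3 Γ (covDeriv 2 Γ Ω) τ = deriv (deriv Q) (x τ) * deriv x τ ^ 4 :=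
    covDeriv_eq_of_eventuallyEq_comp_mul_deriv_pow (eventuallyEq_of_mem (hU.mem_nhds hτ) hΩ')
      (hQa τ hτ).deriv.differentiableAt (hx τ hτ).differentiableAt
      (hx τ hτ).deriv.differentiableAt (hflat τ hτ)
  have hΩ'τ := hΩ' τ hτ
  unfold covDeriv at hΩ'τ hΩ''
  simp only [Nat.cast_ofNat] at hΩ'τ hΩ''
  have hxτ := hx' τ hτ
  rw [hΩ'', hΩ'τ, hΩ τ hτ]
  constructor <;> field_simp
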